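/- Let (L, ≤) be a finite distributive lattice and let G = G(P) and G' = G(P') be girdles of distinct prime ideals P, P'. Then G ≺ G' if and only if ν(G) < ν(G'), where ν(G) is the minimal element of the filter L − P and ν(G') the minimal element of L − P'. -/

import Mathlib

namespace GirdleStmt

variable {L : Type*} [DistribLattice L] [Fintype L]

/-- `P` is an ideal of the lattice: closed under joins of its members and under
meets with arbitrary elements. -/
def IsIdealSet (P : Set L) : Prop :=
  (∀ X ∈ P, ∀ Y ∈ P, X ⊔ Y ∈ P) ∧ (∀ X ∈ P, ∀ Z : L, X ⊓ Z ∈ P)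

/-- `P` is a filter of the lattice: closed under meets of its members and under
joins with arbitrary elements. -/
def IsFilterSet (P : Set L) : Prop :=
  (∀ X ∈ P, ∀ Y ∈ P, X ⊓ Y ∈ P) ∧ (∀ X ∈ P, ∀ Z : L, X ⊔ Z ∈ P)

/-- `P` is a prime ideal: a (nonempty, proper) ideal whose complement is a filter. -/
def IsPrimeIdealSet (P : Set L) : Prop :=
  IsIdealSet P ∧ IsFilterSet Pᶜ ∧ P.Nonempty ∧ Pᶜ.Nonempty

/-- The girdle of a prime ideal `P`: the set of p-factors `Y/X` (covering pairs,
encoded as pairs `(X, Y)` with `X ⋖ Y`) with `X ∈ P` and `Y ∉ P`. -/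
def girdle (P : Set L) : Set (L × L) :=
  {p | p.1 ⋖ p.2 ∧ p.1 ∈ P ∧ p.2 ∉ P}

/-- A maximal (dense) chain of the lattice, from the minimum to the maximum, with
consecutive elements in covering relation. -/
structure MaxChain (L : Type*) [Lattice L] where
  n : ℕ
  ch : Fin (n + 1) → L
  bot : ∀ X : L, ch 0 ≤ X
  top : ∀ X : L, X ≤ ch (Fin.last n)
  cov : ∀ i : Fin n, ch i.castSucc ⋖ ch i.succ

/-- The order `G(P) ≺ G(P')` on girdles: in every maximal chain, every p-factor of
`G(P)` occurring in the chain occurs strictly earlier than every p-factor of `G(P')`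
occurring in the chain. -/
def GirdlePrec (P P' : Set L) : Prop :=
  ∀ (C : MaxChain L) (i j : Fin C.n),
    (C.ch i.castSucc, C.ch i.succ) ∈ girdle P →
    (C.ch j.castSucc, C.ch j.succ) ∈ girdle P' →
    (i : ℕ) < (j : ℕ)

section Aux

set_option linter.unusedSectionVars false

/-- Membership in the complement of a prime ideal is characterized by the minimum
of the complementary filter. -/
lemma not_mem_iff_le {P : Set L} (hP : IsPrimeIdealSet P) {nu : L}
    (hnu : IsLeast Pᶜ nu) (x : L) : x ∉ P ↔ nu ≤ x := by
  constructor
  · intro h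
    exact hnu.2 h
  · intro h
    have h2 : nu ⊔ x ∈ Pᶜ := hP.2.1.2 nu hnu.1 x
    rwa [sup_eq_right.mpr h] at h2

/-- The minimum of the complementary filter of a prime ideal is join-prime. -/
lemma nu_prime {P : Set L} (hP : IsPrimeIdealSet P) {nu : L}
    (hnu : IsLeast Pᶜ nu) {a b : L} (h : nu ≤ a ⊔ b) : nu ≤ a ∨ nu ≤ b := by
  by_contra hc
  push_neg at hc
  have ha : a ∈ P := by
    by_contra h'; exact hc.1 ((not_mem_iff_le hP hnu a).mp h')
  have hb : b ∈ P := by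
    by_contra h'; exact hc.2 ((not_mem_iff_le hP hnu b).mp h')
  have : a ⊔ b ∈ P := hP.1.1 a ha b hb
  exact ((not_mem_iff_le hP hnu _).mpr h) this

/-- In a finite lattice, above any strictly smaller element there is a covering
element below the larger one. -/
lemma exists_covBy_between {a b : L} (h : a < b) : ∃ c, a ⋖ c ∧ c ≤ b := by
  obtain ⟨c, -, hc⟩ := exists_minimal_le_of_wellFoundedLT (fun x => a < x ∧ x ≤ b) b ⟨h, le_rfl⟩
  refine ⟨c, ⟨hc.1.1, ?_⟩, hc.1.2⟩
  intro z haz hzc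
  have hcz : c ≤ z := hc.2 ⟨haz, hzc.le.trans hc.1.2⟩ hzc.le
  exact absurd (hcz.trans_lt hzc) (lt_irrefl c)

/-- Between any two comparable elements of a finite lattice there is a finite chain
of covering steps. -/
lemma exists_covChain : ∀ (k : ℕ) (a b : L), a ≤ b → ({x : L | a ≤ x}).ncard ≤ k →
    ∃ (m : ℕ) (g : Fin (m + 1) → L), g 0 = a ∧ g (Fin.last m) = b ∧
      ∀ i : Fin m, g i.castSucc ⋖ g i.succ := by
  intro k
  induction k with
  | zero =>
    intro a b hab hcard
    exfalso
    have h1 : 0 < ({x : L | a ≤ x}).ncard :=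
      (Set.ncard_pos (Set.toFinite _)).mpr ⟨a, le_rfl⟩
    omega
  | succ k ih =>
    intro a b hab hcard
    rcases eq_or_lt_of_le hab with rfl | hlt
    · exact ⟨0, fun _ => a, rfl, rfl, fun i => i.elim0⟩
    obtain ⟨c, hac, hcb⟩ := exists_covBy_between hlt
    have hsub : {x : L | c ≤ x} ⊂ {x : L | a ≤ x} := by
      constructor
      · intro x hx; exact hac.le.trans hx
      · intro hx
        have : c ≤ a := hx le_rfl
        exact absurd (this.trans_lt hac.lt) (lt_irrefl c)
    have hlt' : ({x : L | c ≤ x}).ncard < ({x : L | a ≤ x}).ncard :=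
      Set.ncard_lt_ncard hsub (Set.toFinite _)
    obtain ⟨m, g, hg0, hgl, hgc⟩ := ih c b hcb (by omega)
    refine ⟨m + 1, Fin.cons a g, Fin.cons_zero _ _, ?_, ?_⟩
    · rw [show (Fin.last (m+1)) = (Fin.last m).succ from rfl, Fin.cons_succ]
      exact hgl
    · intro i
      refine Fin.cases ?_ ?_ i
      · simpa [Fin.cons_succ, hg0] using hac
      · intro j
        rw [← Fin.succ_castSucc, Fin.cons_succ, Fin.cons_succ]
        exact hgc j

/-- A maximal chain is strictly monotone. -/
lemma maxChain_strictMono (C : MaxChain L) : StrictMono C.ch :=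
  Fin.strictMono_iff_lt_succ.mpr fun i => (C.cov i).lt

/-- If a maximal chain starts inside `Q` and ends outside of it, it crosses the
border of `Q` at some covering step. -/
lemma exists_crossing (C : MaxChain L) (Q : Set L) (h0 : C.ch 0 ∈ Q)
    (hl : C.ch (Fin.last C.n) ∉ Q) :
    ∃ i : Fin C.n, C.ch i.castSucc ∈ Q ∧ C.ch i.succ ∉ Q := by
  by_contra h
  push_neg at h
  have key : ∀ k, (hk : k ≤ C.n) → C.ch ⟨k, Nat.lt_succ_of_le hk⟩ ∈ Q := by
    intro k
    induction k with
    | zero => intro _; exact h0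
    | succ k ih =>
      intro hk
      have hkn : k < C.n := hk
      have hmem : C.ch (Fin.castSucc ⟨k, hkn⟩) ∈ Q := ih (le_of_lt hkn)
      exact h ⟨k, hkn⟩ hmem
  exact hl (key C.n le_rfl)

/-- Any non-minimal element of a finite lattice is the upper endpoint of a covering
step of some maximal chain. -/
lemma exists_maxChain_through [Nonempty L] (v : L) (hv : ∃ w : L, ¬ v ≤ w) :
    ∃ (C : MaxChain L) (k : Fin C.n), C.ch k.succ = v := by
  classical
  set botL : L := Finset.univ.inf' Finset.univ_nonempty id with hbotdef
  set topL : L := Finset.univ.sup' Finset.univ_nonempty id with htopdef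
  have hbot : ∀ X : L, botL ≤ X := fun X => Finset.inf'_le id (Finset.mem_univ X)
  have htop : ∀ X : L, X ≤ topL := fun X => Finset.le_sup' id (Finset.mem_univ X)
  have hbv : botL ≤ v := hbot v
  have hvt : v ≤ topL := htop v
  obtain ⟨m1, g1, hg10, hg1l, hg1c⟩ :=
    exists_covChain ({x : L | botL ≤ x}).ncard botL v hbv le_rfl
  obtain ⟨m2, g2, hg20, hg2l, hg2c⟩ :=
    exists_covChain ({x : L | v ≤ x}).ncard v topL hvt le_rfl
  have hm1 : 1 ≤ m1 := by
    by_contra hm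
    have hm0 : m1 = 0 := by omega
    subst hm0
    obtain ⟨w, hw⟩ := hv
    have : botL = v := by rw [← hg10, ← hg1l]; rfl
    exact hw (this ▸ hbot w)
  set N := m1 + m2 with hN
  set h : Fin (N + 1) → L := fun i =>
    if hi : (i : ℕ) < m1 then g1 ⟨i, by omega⟩ else g2 ⟨(i : ℕ) - m1, by omega⟩ with hdef
  have hA : ∀ (t : ℕ) (ht : t < m1 + 1) (ht2 : t < N + 1), h ⟨t, ht2⟩ = g1 ⟨t, ht⟩ := by
    intro t ht ht2
    rw [hdef]
    dsimp only
    split_ifs with hc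
    · rfl
    · have htm : t = m1 := by omega
      subst htm
      have e1 : g2 ⟨t - t, by omega⟩ = v := by
        have : (⟨t - t, by omega⟩ : Fin (m2 + 1)) = 0 := by
          apply Fin.ext; simp
        rw [this, hg20]
      have e2 : g1 ⟨t, ht⟩ = v := by
        have : (⟨t, ht⟩ : Fin (t + 1)) = Fin.last t := by
          apply Fin.ext; simp
        rw [this, hg1l]
      rw [e1, e2]
  have hB : ∀ (t : ℕ) (ht : m1 ≤ t) (ht2 : t < N + 1),
      h ⟨t, ht2⟩ = g2 ⟨t - m1, by omega⟩ := by
    intro t ht ht2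
    rw [hdef]
    dsimp only
    split_ifs with hc
    · omega
    · rfl
  have Hbot : ∀ X : L, h 0 ≤ X := by
    intro X
    have h0 : h 0 = botL := by
      have : (0 : Fin (N + 1)) = ⟨0, by omega⟩ := rfl
      rw [this, hA 0 (by omega) (by omega)]
      have : (⟨0, by omega⟩ : Fin (m1 + 1)) = 0 := rfl
      rw [this, hg10]
    rw [h0]; exact hbot X
  have Htop : ∀ X : L, X ≤ h (Fin.last N) := by
    intro X
    have hL : h (Fin.last N) = topL := by
      have : (Fin.last N) = ⟨N, by omega⟩ := rfl
      rw [this, hB N (by omega) (by omega)]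
      have : (⟨N - m1, by omega⟩ : Fin (m2 + 1)) = Fin.last m2 := by
        apply Fin.ext; simp [hN]
      rw [this, hg2l]
    rw [hL]; exact htop X
  have Hcov : ∀ i : Fin N, h i.castSucc ⋖ h i.succ := by
    intro i
    rcases lt_or_ge ((i : ℕ) + 1) (m1 + 1) with hlt | hge
    · have e1 : h i.castSucc = g1 ⟨(i : ℕ), by omega⟩ := by
        have : i.castSucc = ⟨(i : ℕ), by omega⟩ := rfl
        rw [this, hA (i : ℕ) (by omega) (by omega)]
      have e2 : h i.succ = g1 ⟨(i : ℕ) + 1, by omega⟩ := by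
        have : i.succ = (⟨(i : ℕ) + 1, by omega⟩ : Fin (N + 1)) := rfl
        rw [this, hA ((i : ℕ) + 1) (by omega) (by omega)]
      rw [e1, e2]
      have := hg1c ⟨(i : ℕ), by omega⟩
      convert this using 2 <;> rfl
    · have e1 : h i.castSucc = g2 ⟨(i : ℕ) - m1, by omega⟩ := by
        have : i.castSucc = (⟨(i : ℕ), by omega⟩ : Fin (N + 1)) := rfl
        rw [this, hB (i : ℕ) (by omega) (by omega)]
      have e2 : h i.succ = g2 ⟨(i : ℕ) + 1 - m1, by omega⟩ := by
        have : i.succ = (⟨(i : ℕ) + 1, by omega⟩ : Fin (N + 1)) := rfl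
        rw [this, hB ((i : ℕ) + 1) (by omega) (by omega)]
      rw [e1, e2]
      have hc2 := hg2c ⟨(i : ℕ) - m1, by omega⟩
      have ec : (⟨(i : ℕ) - m1, by omega⟩ : Fin m2).castSucc
          = (⟨(i : ℕ) - m1, by omega⟩ : Fin (m2 + 1)) := rfl
      have es : (⟨(i : ℕ) - m1, by omega⟩ : Fin m2).succ
          = (⟨(i : ℕ) + 1 - m1, by omega⟩ : Fin (m2 + 1)) := by
        apply Fin.ext; simp only [Fin.val_succ]; omega
      rw [ec, es] at hc2
      exact hc2
  refine ⟨⟨N, h, Hbot, Htop, Hcov⟩, ⟨m1 - 1, show m1 - 1 < N by omega⟩, ?_⟩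
  show h (⟨m1 - 1, show m1 - 1 < N by omega⟩ : Fin N).succ = v
  have e : (⟨m1 - 1, show m1 - 1 < N by omega⟩ : Fin N).succ
      = (⟨m1, by omega⟩ : Fin (N + 1)) := by
    apply Fin.ext; simp only [Fin.val_succ]; omega
  rw [e, hB m1 le_rfl (by omega)]
  have e2 : (⟨m1 - m1, by omega⟩ : Fin (m2 + 1)) = 0 := by apply Fin.ext; simp
  rw [e2, hg20]

end Aux

/-- Corollary 5.4: for girdles of distinct prime ideals `P, P'`,
`G(P) ≺ G(P')` holds iff `ν(G(P)) < ν(G(P'))`, where `ν` is the minimal element of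
the complementary filter. -/
theorem statement14 (P P' : Set L)
    (hP : IsPrimeIdealSet P) (hP' : IsPrimeIdealSet P') (hne : P ≠ P')
    (nu nu' : L) (hnu : IsLeast Pᶜ nu) (hnu' : IsLeast P'ᶜ nu') :
    GirdlePrec P P' ↔ nu < nu' := by
  classical
  have hPiff : ∀ x : L, x ∉ P ↔ nu ≤ x := not_mem_iff_le hP hnu
  have hP'iff : ∀ x : L, x ∉ P' ↔ nu' ≤ x := not_mem_iff_le hP' hnu'
  have hnn' : nu ≠ nu' := by
    intro h
    apply hne
    ext x
    constructor
    · intro hx; by_contra hc; exact ((hPiff x).mpr (h ▸ (hP'iff x).mp hc)) hx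
    · intro hx; by_contra hc; exact ((hP'iff x).mpr (h ▸ (hPiff x).mp hc)) hx
  constructor
  · intro hprec
    by_contra hlt
    have hnle : ¬ nu ≤ nu' := fun hle => hlt (lt_of_le_of_ne hle hnn')
    have : Nonempty L := ⟨nu⟩
    have hv : ∃ w : L, ¬ nu' ≤ w := by
      obtain ⟨p, hp⟩ := hP'.2.2.1
      exact ⟨p, fun hle => ((hP'iff p).mpr hle) hp⟩
    obtain ⟨C, k, hk⟩ := exists_maxChain_through nu' hv
    have h0P : C.ch 0 ∈ P := by
      by_contra hc
      obtain ⟨p, hp⟩ := hP.2.2.1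
      exact ((hPiff p).mpr (le_trans ((hPiff _).mp hc) (C.bot p))) hp
    have hlP : C.ch (Fin.last C.n) ∉ P := (hPiff _).mpr (C.top nu)
    obtain ⟨i, hi1, hi2⟩ := exists_crossing C P h0P hlP
    have hgi : (C.ch i.castSucc, C.ch i.succ) ∈ girdle P := ⟨C.cov i, hi1, hi2⟩
    have hkc : C.ch k.castSucc ∈ P' := by
      by_contra hc
      have hle : nu' ≤ C.ch k.castSucc := (hP'iff _).mp hc
      have hlt2 : C.ch k.castSucc < C.ch k.succ := (C.cov k).lt
      rw [hk] at hlt2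
      exact absurd (lt_of_le_of_lt hle hlt2) (lt_irrefl _)
    have hks : C.ch k.succ ∉ P' := (hP'iff _).mpr hk.ge
    have hgk : (C.ch k.castSucc, C.ch k.succ) ∈ girdle P' := ⟨C.cov k, hkc, hks⟩
    have hik := hprec C i k hgi hgk
    have hnu_le : nu ≤ C.ch i.succ := (hPiff _).mp hi2
    have hmono := (maxChain_strictMono C).monotone
    have hle2 : C.ch i.succ ≤ C.ch k.succ := by
      apply hmono
      rw [Fin.le_def]
      simp only [Fin.val_succ]
      omega
    apply hnle
    rw [← hk]
    exact hnu_le.trans hle2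
  · intro hlt C i j hgi hgj
    have hX : nu ≤ C.ch i.succ := (hPiff _).mp hgi.2.2
    have hXc : ¬ nu ≤ C.ch i.castSucc := fun h => ((hPiff _).mpr h) hgi.2.1
    have hY : nu' ≤ C.ch j.succ := (hP'iff _).mp hgj.2.2
    have hYc : ¬ nu' ≤ C.ch j.castSucc := fun h => ((hP'iff _).mpr h) hgj.2.1
    by_contra hij
    push_neg at hij
    rcases eq_or_lt_of_le hij with heq | hlt2
    · have hji : j = i := Fin.ext heq
      subst hji
      have h1 : C.ch j.castSucc < C.ch j.castSucc ⊔ nu := left_lt_sup.mpr hXc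
      have h2 : C.ch j.castSucc ⊔ nu ≤ C.ch j.succ := sup_le (C.cov j).le hX
      have h3 : C.ch j.castSucc ⊔ nu = C.ch j.succ := by
        rcases lt_or_eq_of_le h2 with hh | hh
        · exact absurd hh ((C.cov j).2 h1)
        · exact hh
      have h4 : nu' ≤ C.ch j.castSucc ⊔ nu := by rw [h3]; exact hY
      rcases nu_prime hP' hnu' h4 with h5 | h5
      · exact hYc h5
      · exact absurd (lt_of_lt_of_le hlt h5) (lt_irrefl nu)
    · have hmono := (maxChain_strictMono C).monotone
      have hle3 : C.ch j.succ ≤ C.ch i.castSucc := by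
        apply hmono
        rw [Fin.le_def]
        simp only [Fin.val_succ, Fin.coe_castSucc]
        omega
      exact hXc (le_trans (le_trans hlt.le hY) hle3)

end GirdleStmt
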